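/- B-splines are a special case of NURBS obtained by taking all weights to be identical: if w i = w for all 0 ≤ i ≤ n−1 with w > 0, then for every s ∈ ℝ with k p ≤ s < k n, the NURBS basis function N^i(s) := w i · B^{(i,p)}(s) / ∑_{j=0}^{n-1} w j · B^{(j,p)}(s) equals B^{(i,p)}(s) for every 0 ≤ i ≤ n−1. -/

import Mathlib

/-- Interpolation factor τ(i,q,s) in the Cox–de Boor recursion. -/
noncomputable def coxTau (k : ℕ → ℝ) (i q : ℕ) (s : ℝ) : ℝ :=
  if k (i + q) ≠ k i then (s - k i) / (k (i + q) - k i) else 0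

/-- Interpolation factor σ(i,q,s) in the Cox–de Boor recursion. -/
noncomputable def coxSigma (k : ℕ → ℝ) (i q : ℕ) (s : ℝ) : ℝ :=
  if k (i + q + 1) ≠ k (i + 1) then (k (i + q + 1) - s) / (k (i + q + 1) - k (i + 1)) else 0

/-- The B-spline basis function `Bspline k p i` of degree `p` with index `i`
associated with the knot vector `k`, defined by the Cox–de Boor recursion. -/
noncomputable def Bspline (k : ℕ → ℝ) : ℕ → ℕ → ℝ → ℝ
  | 0, i, s => if k i ≤ s ∧ s < k (i + 1) then 1 else 0
  | q + 1, i, s =>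
      coxTau k i (q + 1) s * Bspline k q i s +
      coxSigma k i (q + 1) s * Bspline k q (i + 1) s

/-!
With equal weights `c` the NURBS denominator is `c` times the sum of the B-splines of degree `p`,
so everything reduces to the partition of unity `∑ j < n, B^{(j,p)}(s) = 1` on `[k p, k n)`.
This is proved by induction on the degree: in the Cox–de Boor recursion the factors multiplying
`B^{(j,q)}` add up to `τ(j,q+1) + σ(j-1,q+1) = 1` wherever `B^{(j,q)}` does not vanish, while the
boundary terms `B^{(0,q)}` and `B^{(n,q)}` vanish on `[k (q+1), k n)` because `B^{(j,q)}` is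
supported in `[k j, k (j+q+1))`.
-/

open Finset

section Bspline

variable {k : ℕ → ℝ}

theorem coxTau_succ_add_coxSigma {i q : ℕ} (h : k (i + q + 1) ≠ k (i + 1)) (s : ℝ) :
    coxTau k (i + 1) q s + coxSigma k i q s = 1 := by
  have hiq : i + 1 + q = i + q + 1 := by omega
  have hd : k (i + q + 1) - k (i + 1) ≠ 0 := sub_ne_zero.mpr h
  simp only [coxTau, coxSigma, hiq, if_pos h]
  field_simp
  ring

theorem Bspline_eq_zero_of_lt (hk : Monotone k) (q : ℕ) {i : ℕ} {s : ℝ} (hs : s < k i) :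
    Bspline k q i s = 0 := by
  induction q generalizing i with
  | zero => simp [Bspline, not_le.mpr hs]
  | succ q ih =>
    rw [Bspline, ih hs, ih (hs.trans_le (hk i.le_succ))]
    ring

theorem Bspline_eq_zero_of_le (hk : Monotone k) (q : ℕ) {i : ℕ} {s : ℝ}
    (hs : k (i + q + 1) ≤ s) :
    Bspline k q i s = 0 := by
  induction q generalizing i with
  | zero => simp [Bspline, hs]
  | succ q ih =>
    rw [Bspline, ih ((hk (by omega)).trans hs), ih ((hk (by omega)).trans hs)]
    ring

theorem Bspline_eq_zero_of_notMem_Ico (hk : Monotone k) (q : ℕ) {i : ℕ} {s : ℝ}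
    (hs : s ∉ Set.Ico (k i) (k (i + q + 1))) : Bspline k q i s = 0 := by
  rcases not_and_or.mp hs with hlt | hge
  · exact Bspline_eq_zero_of_lt hk q (not_le.mp hlt)
  · exact Bspline_eq_zero_of_le hk q (not_lt.mp hge)

theorem coxTau_succ_add_coxSigma_mul_Bspline (hk : Monotone k) (q i : ℕ) (s : ℝ) :
    (coxTau k (i + 1) (q + 1) s + coxSigma k i (q + 1) s) * Bspline k q (i + 1) s
      = Bspline k q (i + 1) s := by
  by_cases hs : s ∈ Set.Ico (k (i + 1)) (k (i + 1 + q + 1))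
  · have hknots : k (i + (q + 1) + 1) ≠ k (i + 1) := by
      rw [show i + (q + 1) + 1 = i + 1 + q + 1 by omega]
      exact (hs.1.trans_lt hs.2).ne'
    rw [coxTau_succ_add_coxSigma hknots, one_mul]
  · rw [Bspline_eq_zero_of_notMem_Ico hk q hs, mul_zero]

-- Turns the degree-zero partition of unity into a telescoping sum.
theorem Bspline_zero_eq_sub (hk : Monotone k) (i : ℕ) (s : ℝ) :
    Bspline k 0 i s = (if k i ≤ s then 1 else 0) - (if k (i + 1) ≤ s then 1 else 0) := by
  have := hk i.le_succ
  simp only [Bspline]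
  split_ifs <;> grind

theorem sum_range_Bspline_succ (hk : Monotone k) {q n : ℕ} {s : ℝ}
    (h1 : k (q + 1) ≤ s) (h2 : s < k n) :
    ∑ j ∈ range n, Bspline k (q + 1) j s = ∑ j ∈ range n, Bspline k q j s := by
  obtain _ | m := n
  · simp
  have hfirst : Bspline k q 0 s = 0 := Bspline_eq_zero_of_le hk q (by simpa using h1)
  have hlast : Bspline k q (m + 1) s = 0 := Bspline_eq_zero_of_lt hk q h2
  simp only [Bspline, sum_add_distrib]
  rw [sum_range_succ', sum_range_succ _ m, sum_range_succ' _ m, hfirst, hlast]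
  simp only [mul_zero, add_zero, ← sum_add_distrib, ← add_mul,
    coxTau_succ_add_coxSigma_mul_Bspline hk]

theorem sum_range_Bspline (hk : Monotone k) {q n : ℕ} {s : ℝ} (h1 : k q ≤ s) (h2 : s < k n) :
    ∑ j ∈ range n, Bspline k q j s = 1 := by
  induction q with
  | zero =>
    simp only [Bspline_zero_eq_sub hk, sum_range_sub', if_pos h1, if_neg (not_le.mpr h2)]
    norm_num
  | succ q ih =>
    rw [sum_range_Bspline_succ hk h1 h2, ih ((hk q.le_succ).trans h1)]

end Bspline

theorem nurbs_equal_weights_eq_bspline_general (n p : ℕ) (k : ℕ → ℝ)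
    (hk : ∀ j, k j ≤ k (j + 1)) (w : ℕ → ℝ) (c : ℝ) (hc : 0 < c)
    (hw : ∀ i < n, w i = c) (i : ℕ) (hi : i < n)
    (s : ℝ) (h1 : k p ≤ s) (h2 : s < k n) :
    w i * Bspline k p i s / ∑ j ∈ Finset.range n, w j * Bspline k p j s
      = Bspline k p i s := by
  have hdenom : ∑ j ∈ range n, w j * Bspline k p j s = c := by
    rw [sum_congr rfl fun j hj => by rw [hw j (mem_range.mp hj)], ← mul_sum,
      sum_range_Bspline (monotone_nat_of_le_succ hk) h1 h2, mul_one]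
  rw [hdenom, hw i hi, mul_div_cancel_left₀ _ hc.ne']

theorem nurbs_equal_weights_eq_bspline (n p : ℕ) (hn : 1 ≤ n) (k : ℕ → ℝ)
    (hk : ∀ j, k j ≤ k (j + 1)) (w : ℕ → ℝ) (c : ℝ) (hc : 0 < c)
    (hw : ∀ i < n, w i = c) (i : ℕ) (hi : i < n)
    (s : ℝ) (h1 : k p ≤ s) (h2 : s < k n) :
    w i * Bspline k p i s / ∑ j ∈ Finset.range n, w j * Bspline k p j s
      = Bspline k p i s :=
  nurbs_equal_weights_eq_bspline_general n p k hk w c hc hw i hi s h1 h2
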